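/- arXiv:2307.02314 — 3 statements merged into one kernel-verified Lean document; each statement's English description precedes it below -/
import Mathlib

section
/- Let G be a graph, S ⊆ V(G), v ∈ V(G), q ≥ 2, and S' = (S \ {v}) ∪ N(v). Then χ'_q(G,S) ≥ χ'_q(G−v, S') ≥ χ'_q(G,S) − q. -/
open Finset

variable {V : Type*}

/-- The set of colours appearing on edges incident to vertex `v`. -/
def vColors (G : SimpleGraph V) (f : V → V → ℕ) (v : V) : Set ℕ :=
  {c | ∃ u, G.Adj v u ∧ f v u = c}

/-- The set of colours used on edges of `G`. -/
def colorsOf (G : SimpleGraph V) (f : V → V → ℕ) : Set ℕ :=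
  {c | ∃ u v, G.Adj u v ∧ f u v = c}

/-- An edge `q`-colouring: a symmetric assignment of colours to edges such that
every vertex is incident with at most `q` distinct colours. -/
def IsEdgeQColoring (G : SimpleGraph V) (q : ℕ) (f : V → V → ℕ) : Prop :=
  (∀ u v, f u v = f v u) ∧ ∀ v, (vColors G f v).ncard ≤ q

/-- `S`-composability: every vertex of `S` sees at most `q - 1` non-zero colours. -/
def IsComposable (G : SimpleGraph V) (q : ℕ) (S : Set V) (f : V → V → ℕ) : Prop :=
  ∀ v ∈ S, ((vColors G f v) \ {0}).ncard ≤ q - 1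

/-- `χ'_q(G, S)`: maximum number of non-zero colours of an `S`-composable edge
`q`-colouring of `G`. -/
noncomputable def chiq (G : SimpleGraph V) (q : ℕ) (S : Set V) : ℕ :=
  sSup {k | ∃ f, IsEdgeQColoring G q f ∧ IsComposable G q S f ∧
    ((colorsOf G f) \ {0}).ncard = k}

/-- `χ'_q(G)`: maximum number of distinct colours of an edge `q`-colouring of `G`. -/
noncomputable def chimax (G : SimpleGraph V) (q : ℕ) : ℕ :=
  sSup {k | ∃ f, IsEdgeQColoring G q f ∧ (colorsOf G f).ncard = k}

/-- `M` is a matching in `G`: a set of edges, pairwise not sharing a vertex. -/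
def IsMatchingSet (G : SimpleGraph V) (M : Set (Sym2 V)) : Prop :=
  M ⊆ G.edgeSet ∧ ∀ e ∈ M, ∀ e' ∈ M, e ≠ e' → ∀ v, v ∈ e → v ∉ e'

/-- `M` is a maximal matching in `G`. -/
def IsMaximalMatchingSet (G : SimpleGraph V) (M : Set (Sym2 V)) : Prop :=
  IsMatchingSet G M ∧ ∀ e ∈ G.edgeSet, ∃ e' ∈ M, ∃ v, v ∈ e ∧ v ∈ e'

/-- `X` is a vertex cover of `G`. -/
def IsVertexCover (G : SimpleGraph V) (X : Set V) : Prop :=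
  ∀ e ∈ G.edgeSet, ∃ v ∈ X, v ∈ e

/-- A layering of `G`. -/
def IsLayering (G : SimpleGraph V) (lam : V → ℤ) : Prop :=
  ∀ u v, G.Adj u v → |lam u - lam v| ≤ 1

/-- The graph part `G_m` of the `(λ, r, m)`-stratification: delete all edges `uv`
with `λ(u) ≡ m` and `λ(v) ≡ m + 1 (mod r)`. -/
def stratGraph (G : SimpleGraph V) (lam : V → ℤ) (r m : ℤ) : SimpleGraph V where
  Adj u v := G.Adj u v ∧
    ¬ ((lam u ≡ m [ZMOD r] ∧ lam v ≡ m + 1 [ZMOD r]) ∨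
       (lam v ≡ m [ZMOD r] ∧ lam u ≡ m + 1 [ZMOD r]))
  symm := by
    constructor
    intro u v h
    exact ⟨h.1.symm, fun hc => h.2 hc.symm⟩
  loopless := ⟨fun v h => G.loopless.irrefl v h.1⟩

/-- The set `S_m` of the `(λ, r, m)`-stratification: vertices incident with deleted
edges. -/
def stratSet (G : SimpleGraph V) (lam : V → ℤ) (r m : ℤ) : Set V :=
  {v | ∃ u, G.Adj v u ∧ ¬ (stratGraph G lam r m).Adj v u}

/-!
Extending an optimal colouring of `G - v` by the colour `0` on the edges at `v` keeps all its
non-zero colours; the neighbours of `v` see one extra colour, which is why they must be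
composable in `G - v`. Conversely, restricting an optimal colouring of `G` to `G - v` and
recolouring with `0` every edge whose colour appears at `v` loses at most the `q` colours seen
at `v`, and now every neighbour `w` of `v` has lost the colour of `wv`, so it sees at most
`q - 1` non-zero colours.
-/

section Finiteness

variable [Finite V]

lemma vColors_finite (G : SimpleGraph V) (f : V → V → ℕ) (w : V) : (vColors G f w).Finite :=
  (Set.finite_range (f w)).subset (by rintro c ⟨u, -, rfl⟩; exact ⟨u, rfl⟩)

lemma colorsOf_finite (G : SimpleGraph V) (f : V → V → ℕ) : (colorsOf G f).Finite :=
  (Set.finite_range fun p : V × V => f p.1 p.2).subset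
    (by rintro c ⟨u, w, -, rfl⟩; exact ⟨(u, w), rfl⟩)

lemma bddAbove_chiq (G : SimpleGraph V) (q : ℕ) (S : Set V) :
    BddAbove {k | ∃ f, IsEdgeQColoring G q f ∧ IsComposable G q S f ∧
      ((colorsOf G f) \ {0}).ncard = k} := by
  refine ⟨Nat.card (V × V), ?_⟩
  rintro k ⟨f, -, -, rfl⟩
  have hsub : colorsOf G f \ {0} ⊆ (fun p : V × V => f p.1 p.2) '' Set.univ := by
    rintro c ⟨⟨u, w, -, rfl⟩, -⟩
    exact ⟨(u, w), trivial, rfl⟩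
  calc (colorsOf G f \ {0}).ncard
      ≤ ((fun p : V × V => f p.1 p.2) '' Set.univ).ncard :=
        Set.ncard_le_ncard hsub (Set.toFinite _)
    _ ≤ (Set.univ : Set (V × V)).ncard := Set.ncard_image_le
    _ = Nat.card (V × V) := Set.ncard_univ _

lemma le_chiq {G : SimpleGraph V} {q : ℕ} {S : Set V} {f : V → V → ℕ}
    (hf : IsEdgeQColoring G q f) (hS : IsComposable G q S f) :
    (colorsOf G f \ {0}).ncard ≤ chiq G q S :=
  le_csSup (bddAbove_chiq G q S) ⟨f, hf, hS, rfl⟩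

end Finiteness

lemma chiq_le {G : SimpleGraph V} {q : ℕ} {S : Set V} {M : ℕ}
    (h : ∀ f, IsEdgeQColoring G q f → IsComposable G q S f →
      (colorsOf G f \ {0}).ncard ≤ M) :
    chiq G q S ≤ M :=
  csSup_le' (by rintro k ⟨f, hf, hS, rfl⟩; exact h f hf hS)

abbrev deleteVertex (G : SimpleGraph V) (v : V) : SimpleGraph {w : V // w ≠ v} :=
  G.comap Subtype.val

section ExtendByZero

variable {G : SimpleGraph V} {v : V} {q : ℕ}
  {f : {w : V // w ≠ v} → {w : V // w ≠ v} → ℕ}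

open Classical in
noncomputable def extendByZero (v : V) (f : {w : V // w ≠ v} → {w : V // w ≠ v} → ℕ) :
    V → V → ℕ :=
  fun u w => if hu : u = v then 0 else if hw : w = v then 0 else f ⟨u, hu⟩ ⟨w, hw⟩

@[simp]
lemma extendByZero_val (a b : {w : V // w ≠ v}) : extendByZero v f a b = f a b := by
  simp [extendByZero, a.2, b.2]

lemma extendByZero_of_eq_or_eq {u w : V} (h : u = v ∨ w = v) : extendByZero v f u w = 0 := by
  rcases h with rfl | rfl <;> simp [extendByZero]

lemma extendByZero_symm (hf : ∀ a b, f a b = f b a) (u w : V) :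
    extendByZero v f u w = extendByZero v f w u := by
  by_cases hu : u = v
  · rw [extendByZero_of_eq_or_eq (Or.inl hu), extendByZero_of_eq_or_eq (Or.inr hu)]
  by_cases hw : w = v
  · rw [extendByZero_of_eq_or_eq (Or.inr hw), extendByZero_of_eq_or_eq (Or.inl hw)]
  exact (extendByZero_val (f := f) ⟨u, hu⟩ ⟨w, hw⟩).trans
    ((hf _ _).trans (extendByZero_val ⟨w, hw⟩ ⟨u, hu⟩).symm)

lemma vColors_extendByZero_self : vColors G (extendByZero v f) v ⊆ {0} := by
  rintro c ⟨u, -, rfl⟩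
  exact extendByZero_of_eq_or_eq (Or.inl rfl)

lemma vColors_extendByZero_sdiff_zero (a : {w : V // w ≠ v}) :
    vColors G (extendByZero v f) a \ {0} ⊆ vColors (deleteVertex G v) f a \ {0} := by
  rintro c ⟨⟨u, hau, rfl⟩, hc⟩
  have hu : u ≠ v := fun h => hc (extendByZero_of_eq_or_eq (Or.inr h))
  exact ⟨⟨⟨u, hu⟩, hau, (extendByZero_val a ⟨u, hu⟩).symm⟩, hc⟩

lemma vColors_extendByZero_of_not_adj (a : {w : V // w ≠ v}) (ha : ¬G.Adj v a) :
    vColors G (extendByZero v f) a ⊆ vColors (deleteVertex G v) f a := by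
  rintro c ⟨u, hau, rfl⟩
  have hu : u ≠ v := by rintro rfl; exact ha hau.symm
  exact ⟨⟨u, hu⟩, hau, (extendByZero_val a ⟨u, hu⟩).symm⟩

lemma colorsOf_extendByZero_sdiff_zero :
    colorsOf G (extendByZero v f) \ {0} = colorsOf (deleteVertex G v) f \ {0} := by
  ext c
  constructor
  · rintro ⟨⟨u, w, huw, rfl⟩, hc⟩
    have hu : u ≠ v := fun h => hc (extendByZero_of_eq_or_eq (Or.inl h))
    have hw : w ≠ v := fun h => hc (extendByZero_of_eq_or_eq (Or.inr h))
    exact ⟨⟨⟨u, hu⟩, ⟨w, hw⟩, huw, (extendByZero_val _ _).symm⟩, hc⟩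
  · rintro ⟨⟨a, b, hab, rfl⟩, hc⟩
    exact ⟨⟨a, b, hab, extendByZero_val a b⟩, hc⟩

variable [Finite V]

lemma isEdgeQColoring_extendByZero (hq : 1 ≤ q) (hf : IsEdgeQColoring (deleteVertex G v) q f)
    (hN : IsComposable (deleteVertex G v) q {a | G.Adj v a} f) :
    IsEdgeQColoring G q (extendByZero v f) := by
  refine ⟨extendByZero_symm hf.1, fun w => ?_⟩
  by_cases hw : w = v
  · subst hw
    calc (vColors G (extendByZero w f) w).ncard ≤ ({0} : Set ℕ).ncard :=
          Set.ncard_le_ncard vColors_extendByZero_self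
      _ ≤ q := by simpa using hq
  set a : {w : V // w ≠ v} := ⟨w, hw⟩
  by_cases hadj : G.Adj v a
  · calc (vColors G (extendByZero v f) a).ncard
        ≤ (vColors G (extendByZero v f) a \ {0}).ncard + ({0} : Set ℕ).ncard :=
          Set.ncard_le_ncard_sdiff_add_ncard _ _
      _ ≤ (vColors (deleteVertex G v) f a \ {0}).ncard + 1 := by
          rw [Set.ncard_singleton]
          exact Nat.add_le_add_right (Set.ncard_le_ncard (vColors_extendByZero_sdiff_zero a)
            (vColors_finite _ _ _).sdiff) 1
      _ ≤ q := by have := hN a hadj; omega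
  · exact (Set.ncard_le_ncard (vColors_extendByZero_of_not_adj a hadj)
      (vColors_finite _ _ _)).trans (hf.2 a)

lemma isComposable_extendByZero {S : Set V}
    (hf : IsComposable (deleteVertex G v) q {a | (a : V) ∈ S} f) :
    IsComposable G q S (extendByZero v f) := by
  intro w hwS
  by_cases hw : w = v
  · subst hw
    simp [Set.sdiff_eq_empty.mpr vColors_extendByZero_self]
  · exact (Set.ncard_le_ncard (vColors_extendByZero_sdiff_zero ⟨w, hw⟩)
      (vColors_finite _ _ _).sdiff).trans (hf ⟨w, hw⟩ hwS)

end ExtendByZero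

section EraseColorsAt

variable {G : SimpleGraph V} {v : V} {q : ℕ} {f : V → V → ℕ}

open Classical in
noncomputable def eraseColorsAt (G : SimpleGraph V) (v : V) (f : V → V → ℕ) :
    {w : V // w ≠ v} → {w : V // w ≠ v} → ℕ :=
  fun a b => if f a b ∈ vColors G f v then 0 else f a b

lemma eraseColorsAt_eq_self_of_ne_zero {a b : {w : V // w ≠ v}}
    (h : eraseColorsAt G v f a b ≠ 0) :
    eraseColorsAt G v f a b = f a b ∧ f a b ∉ vColors G f v := by
  unfold eraseColorsAt at h ⊢
  split_ifs at h ⊢ with hC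
  · exact absurd rfl h
  · exact ⟨rfl, hC⟩

lemma vColors_eraseColorsAt_sdiff_zero (a : {w : V // w ≠ v}) :
    vColors (deleteVertex G v) (eraseColorsAt G v f) a \ {0} ⊆
      (vColors G f a \ vColors G f v) \ {0} := by
  rintro c ⟨⟨b, hab, rfl⟩, hc⟩
  obtain ⟨heq, hC⟩ := eraseColorsAt_eq_self_of_ne_zero hc
  exact ⟨⟨heq ▸ ⟨b, hab, rfl⟩, heq ▸ hC⟩, hc⟩

variable [Finite V]

lemma isEdgeQColoring_eraseColorsAt (hf : IsEdgeQColoring G q f) :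
    IsEdgeQColoring (deleteVertex G v) q (eraseColorsAt G v f) := by
  classical
  refine ⟨fun a b => by simp only [eraseColorsAt, hf.1 a b], fun a => ?_⟩
  let erase : ℕ → ℕ := fun c => if c ∈ vColors G f v then 0 else c
  have hsub : vColors (deleteVertex G v) (eraseColorsAt G v f) a ⊆
      erase '' vColors G f a := by
    rintro c ⟨b, hab, rfl⟩
    exact ⟨f a b, ⟨b, hab, rfl⟩, rfl⟩
  calc _ ≤ (erase '' vColors G f a).ncard :=
        Set.ncard_le_ncard hsub ((vColors_finite _ _ _).image _)
    _ ≤ (vColors G f a).ncard := Set.ncard_image_le (vColors_finite _ _ _)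
    _ ≤ q := hf.2 a

lemma isComposable_eraseColorsAt {S : Set V} (hf : IsEdgeQColoring G q f)
    (hS : IsComposable G q S f) :
    IsComposable (deleteVertex G v) q {a | (a : V) ∈ (S \ {v}) ∪ G.neighborSet v}
      (eraseColorsAt G v f) := by
  rintro a (haS | hadj)
  · refine (Set.ncard_le_ncard ?_ (vColors_finite _ _ _).sdiff).trans (hS a haS.1)
    exact (vColors_eraseColorsAt_sdiff_zero a).trans fun c hc => ⟨hc.1.1, hc.2⟩
  · have hav : f a v ∈ vColors G f a := ⟨v, G.adj_symm hadj, rfl⟩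
    have hva : f a v ∈ vColors G f v := ⟨a, hadj, hf.1 v a⟩
    have hsub : vColors (deleteVertex G v) (eraseColorsAt G v f) a \ {0} ⊆
        vColors G f a \ {f a v} :=
      (vColors_eraseColorsAt_sdiff_zero a).trans fun c hc =>
        ⟨hc.1.1, fun h => hc.1.2 (Set.mem_singleton_iff.mp h ▸ hva)⟩
    calc _ ≤ (vColors G f a \ {f a v}).ncard :=
          Set.ncard_le_ncard hsub (vColors_finite _ _ _).sdiff
      _ = (vColors G f a).ncard - 1 := Set.ncard_sdiff_singleton_of_mem hav
      _ ≤ q - 1 := Nat.sub_le_sub_right (hf.2 a) 1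

lemma ncard_colorsOf_le_eraseColorsAt_add (hf : IsEdgeQColoring G q f) :
    (colorsOf G f \ {0}).ncard ≤
      (colorsOf (deleteVertex G v) (eraseColorsAt G v f) \ {0}).ncard + q := by
  have hsub : (colorsOf G f \ {0}) \ vColors G f v ⊆
      colorsOf (deleteVertex G v) (eraseColorsAt G v f) \ {0} := by
    rintro c ⟨⟨⟨u, w, huw, rfl⟩, hc⟩, hC⟩
    have hu : u ≠ v := by rintro rfl; exact hC ⟨w, huw, rfl⟩
    have hw : w ≠ v := by rintro rfl; exact hC ⟨u, huw.symm, hf.1 w u⟩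
    refine ⟨⟨⟨u, hu⟩, ⟨w, hw⟩, huw, ?_⟩, hc⟩
    simp [eraseColorsAt, hC]
  calc (colorsOf G f \ {0}).ncard
      ≤ ((colorsOf G f \ {0}) \ vColors G f v).ncard + (vColors G f v).ncard :=
        Set.ncard_le_ncard_sdiff_add_ncard _ _ (vColors_finite _ _ _)
    _ ≤ _ := add_le_add (Set.ncard_le_ncard hsub (colorsOf_finite _ _).sdiff) (hf.2 v)

end EraseColorsAt

theorem stmt5_general [Fintype V] (G : SimpleGraph V) (S : Set V) (v : V)
    (q : ℕ) (hq : 2 ≤ q) :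
    chiq (G.comap (fun w : {w : V // w ≠ v} => (w : V))) q
        {w : {w : V // w ≠ v} | (w : V) ∈ (S \ {v}) ∪ G.neighborSet v} ≤ chiq G q S ∧
    chiq G q S - q ≤
      chiq (G.comap (fun w : {w : V // w ≠ v} => (w : V))) q
        {w : {w : V // w ≠ v} | (w : V) ∈ (S \ {v}) ∪ G.neighborSet v} := by
  constructor
  · refine chiq_le fun f hf hS' => ?_
    have hfG : IsEdgeQColoring G q (extendByZero v f) :=
      isEdgeQColoring_extendByZero (by omega) hf fun a ha => hS' a (Or.inr ha)
    have hSG : IsComposable G q S (extendByZero v f) :=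
      isComposable_extendByZero fun a ha => hS' a (Or.inl ⟨ha, a.2⟩)
    rw [← colorsOf_extendByZero_sdiff_zero]
    exact le_chiq hfG hSG
  · refine Nat.sub_le_iff_le_add.mpr (chiq_le fun f hf hS => ?_)
    exact (ncard_colorsOf_le_eraseColorsAt_add hf).trans
      (Nat.add_le_add_right (le_chiq (isEdgeQColoring_eraseColorsAt hf)
        (isComposable_eraseColorsAt hf hS)) q)

/-- with `S' = (S \ {v}) ∪ N(v)`,
`χ'_q(G,S) ≥ χ'_q(G − v, S') ≥ χ'_q(G,S) − q`. -/
theorem stmt5 [Fintype V] [DecidableEq V] (G : SimpleGraph V) (S : Set V) (v : V)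
    (q : ℕ) (hq : 2 ≤ q) :
    chiq (G.comap (fun w : {w : V // w ≠ v} => (w : V))) q
        {w : {w : V // w ≠ v} | (w : V) ∈ (S \ {v}) ∪ G.neighborSet v} ≤ chiq G q S ∧
    chiq G q S - q ≤
      chiq (G.comap (fun w : {w : V // w ≠ v} => (w : V))) q
        {w : {w : V // w ≠ v} | (w : V) ∈ (S \ {v}) ∪ G.neighborSet v} :=
  stmt5_general G S v q hq
end

section
/- Let G be a graph, q ≥ 2, and let G' be obtained from G by attaching, for each vertex v of G, exactly q − g(v) new pendant vertices adjacent to v, where g : V(G) → {1,2}. Let n = |V(G)|, r = |{v : g(v)=1}|, and t ≥ 0. Then G has an edge g-colouring using at least t distinct colours if and only if G' has an edge q-colouring using at least t + r + (q−2)n distinct colours. -/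
open Finset

variable {V : Type*}

/-- An edge `g`-colouring for a per-vertex bound `g`. -/
def IsEdgeGColoring (G : SimpleGraph V) (g : V → ℕ) (f : V → V → ℕ) : Prop :=
  (∀ u v, f u v = f v u) ∧ ∀ v, (vColors G f v).ncard ≤ g v

/-- The graph obtained from `G` by attaching `p v` pendant vertices to each
vertex `v`; the pendant vertices of `v` are `Sum.inr (v, i)` for `i < p v`. -/
def pendantGraph (G : SimpleGraph V) (p : V → ℕ) : SimpleGraph (V ⊕ V × ℕ) where
  Adj x y :=
    match x, y with
    | Sum.inl u, Sum.inl v => G.Adj u v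
    | Sum.inl u, Sum.inr (w, i) => w = u ∧ i < p w
    | Sum.inr (w, i), Sum.inl u => w = u ∧ i < p w
    | Sum.inr _, Sum.inr _ => False
  symm := by
    constructor
    rintro (u | ⟨w, i⟩) (v | ⟨w', j⟩) h
    · exact h.symm
    · exact h
    · exact h
    · exact h
  loopless := by
    constructor
    rintro (u | ⟨w, i⟩) h
    · exact G.loopless.irrefl u h
    · exact h.elim
/-!
Going from `G` to `G'`, colour every pendant edge with its own fresh colour: a vertex `v`
then sees at most `g v + (q - g v) = q` colours. Conversely, restrict a `q`-colouring of `G'`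
to `G`. A vertex `v` loses the colours that only its pendant edges carried, and it may still
see more than `g v` colours; repeatedly merging two of its colours into one repairs that,
and each merge costs at most one colour overall. Since `v` sees at most `q = g v + p v`
colours in `G'`, the colours lost at `v` plus the merges needed at `v` are at most its
number `p v` of pendant vertices.
-/

section Recolour

variable {α : Type*} [DecidableEq α]

def recolour (a b : α) (c : α) : α := if c = a then b else c

lemma ncard_le_ncard_image_recolour_add_one (a b : α) {s : Set α} (hs : s.Finite) :
    s.ncard ≤ (recolour a b '' s).ncard + 1 := by
  have hsub : s \ {a} ⊆ recolour a b '' s := fun c ⟨hc, hca⟩ => ⟨c, hc, if_neg hca⟩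
  have := Set.ncard_le_ncard hsub (hs.image _)
  have := Set.pred_ncard_le_ncard_sdiff_singleton s a
  omega

lemma ncard_image_recolour_lt {a b : α} {s : Set α} (hs : s.Finite) (ha : a ∈ s) (hb : b ∈ s)
    (hab : a ≠ b) : (recolour a b '' s).ncard < s.ncard := by
  have hsub : recolour a b '' s ⊆ s \ {a} := by
    rintro _ ⟨c, hc, rfl⟩
    unfold recolour
    split_ifs with hca
    · exact ⟨hb, hab.symm⟩
    · exact ⟨hc, hca⟩
  calc (recolour a b '' s).ncard ≤ (s \ {a}).ncard := Set.ncard_le_ncard hsub hs.sdiff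
    _ < s.ncard := Set.ncard_sdiff_singleton_lt_of_mem ha hs

end Recolour

section Colourings

variable {W : Type*} (G : SimpleGraph W) (f : W → W → ℕ)

instance finite_vColors [Finite W] (v : W) : Finite (vColors G f v) :=
  Finite.Set.subset (Set.range (f v)) fun _ ⟨u, _, hu⟩ => ⟨u, hu⟩

instance finite_colorsOf [Finite W] : Finite (colorsOf G f) :=
  Finite.Set.subset (Set.range fun x : W × W => f x.1 x.2) fun _ ⟨u, v, _, h⟩ => ⟨(u, v), h⟩

lemma vColors_subset_colorsOf (v : W) : vColors G f v ⊆ colorsOf G f :=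
  fun _ ⟨u, hu, hc⟩ => ⟨v, u, hu, hc⟩

lemma vColors_comp (φ : ℕ → ℕ) (v : W) :
    vColors G (fun x y => φ (f x y)) v = φ '' vColors G f v := by
  ext c
  constructor
  · rintro ⟨u, hu, rfl⟩
    exact ⟨f v u, ⟨u, hu, rfl⟩, rfl⟩
  · rintro ⟨_, ⟨u, hu, rfl⟩, rfl⟩
    exact ⟨u, hu, rfl⟩

lemma colorsOf_comp (φ : ℕ → ℕ) : colorsOf G (fun x y => φ (f x y)) = φ '' colorsOf G f := by
  ext c
  constructor
  · rintro ⟨u, w, hu, rfl⟩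
    exact ⟨f u w, ⟨u, w, hu, rfl⟩, rfl⟩
  · rintro ⟨_, ⟨u, w, hu, rfl⟩, rfl⟩
    exact ⟨u, w, hu, rfl⟩

/-- Truncated subtraction: only vertices over budget contribute. -/
noncomputable def excess [Fintype W] (g : W → ℕ) : ℕ :=
  ∑ v, ((vColors G f v).ncard - g v)

lemma excess_recolour_lt [Fintype W] {g : W → ℕ} {v : W} (hv : g v < (vColors G f v).ncard)
    {a b : ℕ} (ha : a ∈ vColors G f v) (hb : b ∈ vColors G f v) (hab : a ≠ b) :
    excess G (fun x y => recolour a b (f x y)) g < excess G f g := by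
  refine Finset.sum_lt_sum (fun u _ => ?_) ⟨v, Finset.mem_univ v, ?_⟩
  · rw [vColors_comp]
    exact Nat.sub_le_sub_right (Set.ncard_image_le (Set.toFinite _)) _
  · rw [vColors_comp]
    have := ncard_image_recolour_lt (Set.toFinite _) ha hb hab
    omega

theorem exists_isEdgeGColoring_add_excess [Fintype W] {g : W → ℕ} (hg : ∀ v, 1 ≤ g v)
    (hf : ∀ u v, f u v = f v u) :
    ∃ f₀, IsEdgeGColoring G g f₀ ∧
      (colorsOf G f).ncard ≤ (colorsOf G f₀).ncard + excess G f g := by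
  induction hD : excess G f g using Nat.strong_induction_on generalizing f with
  | _ D ih =>
  by_cases hbudget : ∀ v, (vColors G f v).ncard ≤ g v
  · exact ⟨f, ⟨hf, hbudget⟩, Nat.le_add_right _ _⟩
  obtain ⟨v, hv⟩ := not_forall.mp hbudget
  obtain ⟨a, ha, b, hb, hab⟩ :=
    (Set.one_lt_ncard (s := vColors G f v)).mp (by have := hg v; omega)
  have hlt := hD ▸ excess_recolour_lt G f (not_le.mp hv) ha hb hab
  obtain ⟨f₀, hf₀, hcard⟩ := ih _ hlt _ (fun x y => by rw [hf x y]) rfl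
  refine ⟨f₀, hf₀, ?_⟩
  have := ncard_le_ncard_image_recolour_add_one a b (Set.toFinite (colorsOf G f))
  rw [← colorsOf_comp] at this
  omega

end Colourings

section PendantGraph

variable {G : SimpleGraph V} {p : V → ℕ}

def pendantColours (f' : V ⊕ V × ℕ → V ⊕ V × ℕ → ℕ) (p : V → ℕ) (v : V) : Set ℕ :=
  (fun i => f' (.inl v) (.inr (v, i))) '' Set.Iio (p v)

instance finite_pendantColours (f' : V ⊕ V × ℕ → V ⊕ V × ℕ → ℕ) (v : V) :
    Finite (pendantColours f' p v) :=
  ((Set.finite_Iio _).image _).to_subtype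

lemma ncard_pendantColours_le (f' : V ⊕ V × ℕ → V ⊕ V × ℕ → ℕ) (v : V) :
    (pendantColours f' p v).ncard ≤ p v := by
  refine (Set.ncard_image_le (Set.finite_Iio _)).trans_eq ?_
  rw [← Finset.coe_range, Set.ncard_coe_finset, Finset.card_range]

lemma vColors_pendantGraph_inl (f' : V ⊕ V × ℕ → V ⊕ V × ℕ → ℕ) (v : V) :
    vColors (pendantGraph G p) f' (.inl v) =
      vColors G (fun x y => f' (.inl x) (.inl y)) v ∪ pendantColours f' p v := by
  ext c
  constructor
  · rintro ⟨u | ⟨w, i⟩, hadj, rfl⟩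
    · exact .inl ⟨u, hadj, rfl⟩
    · obtain ⟨rfl, hi⟩ := hadj
      exact .inr ⟨i, hi, rfl⟩
  · rintro (⟨u, hu, rfl⟩ | ⟨i, hi, rfl⟩)
    · exact ⟨.inl u, hu, rfl⟩
    · exact ⟨.inr (v, i), ⟨rfl, hi⟩, rfl⟩

lemma colorsOf_pendantGraph {f' : V ⊕ V × ℕ → V ⊕ V × ℕ → ℕ} (hf' : ∀ x y, f' x y = f' y x) :
    colorsOf (pendantGraph G p) f' =
      colorsOf G (fun x y => f' (.inl x) (.inl y)) ∪ ⋃ v, pendantColours f' p v := by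
  ext c
  constructor
  · rintro ⟨u | ⟨w, i⟩, v | ⟨w', j⟩, hadj, rfl⟩
    · exact .inl ⟨u, v, hadj, rfl⟩
    · obtain ⟨rfl, hj⟩ := hadj
      exact .inr (Set.mem_iUnion.mpr ⟨w', j, hj, rfl⟩)
    · obtain ⟨rfl, hi⟩ := hadj
      exact .inr (Set.mem_iUnion.mpr ⟨w, i, hi, hf' _ _⟩)
    · exact hadj.elim
  · rintro (⟨u, v, huv, rfl⟩ | hc)
    · exact ⟨.inl u, .inl v, huv, rfl⟩
    · obtain ⟨v, i, hi, rfl⟩ := Set.mem_iUnion.mp hc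
      exact ⟨.inl v, .inr (v, i), ⟨rfl, hi⟩, rfl⟩

lemma vColors_pendantGraph_inr_subset (f' : V ⊕ V × ℕ → V ⊕ V × ℕ → ℕ) (w : V) (i : ℕ) :
    vColors (pendantGraph G p) f' (.inr (w, i)) ⊆
      {c | i < p w ∧ c = f' (.inr (w, i)) (.inl w)} := by
  rintro c ⟨u | _, hadj, rfl⟩
  · obtain ⟨rfl, hi⟩ := hadj
    exact ⟨hi, rfl⟩
  · exact hadj.elim

end PendantGraph

lemma exists_injective_nat_forall_notMem {α : Type*} [Countable α] {s : Set ℕ} (hs : s.Finite) :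
    ∃ e : α → ℕ, Function.Injective e ∧ ∀ a, e a ∉ s := by
  obtain ⟨N, hN⟩ := hs.bddAbove
  obtain ⟨e, he⟩ := Countable.exists_injective_nat α
  refine ⟨fun a => N + 1 + e a, (add_right_injective _).comp he, fun a ha => ?_⟩
  have : N + 1 + e a ≤ N := hN ha
  omega

def pendantExtension (f : V → V → ℕ) (e : V × ℕ → ℕ) : V ⊕ V × ℕ → V ⊕ V × ℕ → ℕ
  | .inl u, .inl v => f u v
  | .inl _, .inr w => e w
  | .inr w, .inl _ => e w
  | .inr _, .inr _ => 0

section Extension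

variable {G : SimpleGraph V} {g p : V → ℕ} {q : ℕ} {f : V → V → ℕ}

lemma pendantExtension_comm (hf : ∀ u v, f u v = f v u) (e : V × ℕ → ℕ) (x y : V ⊕ V × ℕ) :
    pendantExtension f e x y = pendantExtension f e y x := by
  rcases x with u | w <;> rcases y with v | w'
  exacts [hf u v, rfl, rfl, rfl]

lemma isEdgeQColoring_pendantExtension (hf : IsEdgeGColoring G g f) (hgp : ∀ v, g v + p v ≤ q)
    (e : V × ℕ → ℕ) : IsEdgeQColoring (pendantGraph G p) q (pendantExtension f e) := by
  refine ⟨pendantExtension_comm hf.1 e, fun x => ?_⟩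
  rcases x with v | ⟨w, i⟩
  · rw [vColors_pendantGraph_inl]
    calc _ ≤ (vColors G f v).ncard + (pendantColours (pendantExtension f e) p v).ncard :=
          Set.ncard_union_le _ _
      _ ≤ g v + p v := add_le_add (hf.2 v) (ncard_pendantColours_le _ v)
      _ ≤ q := hgp v
  · refine (Set.ncard_le_ncard (vColors_pendantGraph_inr_subset _ w i)
      ((Set.finite_singleton _).subset fun c hc => hc.2)).trans ?_
    by_cases hi : i < p w
    · have := hgp w
      simp only [hi, true_and, Set.ofPred_eq_eq_singleton, Set.ncard_singleton]
      omega
    · simp [hi]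

lemma ncard_colorsOf_pendantExtension [Fintype V] (hf : ∀ u v, f u v = f v u) {e : V × ℕ → ℕ}
    (he : Function.Injective e) (hfresh : ∀ w, e w ∉ colorsOf G f) :
    (colorsOf (pendantGraph G p) (pendantExtension f e)).ncard =
      (colorsOf G f).ncard + ∑ v, p v := by
  have hdisj : Pairwise (Function.onFun Disjoint (pendantColours (pendantExtension f e) p)) := by
    refine fun v v' hvv' => Set.disjoint_left.mpr ?_
    rintro _ ⟨i, -, rfl⟩ ⟨j, -, hij⟩
    exact hvv' (congrArg Prod.fst (he hij)).symm
  have hcard : ∀ v, (pendantColours (pendantExtension f e) p v).ncard = p v := fun v => by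
    change (e ∘ Prod.mk v '' _).ncard = _
    rw [Set.ncard_image_of_injective _ (he.comp (Prod.mk_right_injective v)),
      ← Finset.coe_range, Set.ncard_coe_finset, Finset.card_range]
  have hfresh' : Disjoint (colorsOf G f) (⋃ v, pendantColours (pendantExtension f e) p v) := by
    refine Set.disjoint_left.mpr fun c hc hc' => ?_
    obtain ⟨v, i, -, rfl⟩ := Set.mem_iUnion.mp hc'
    exact hfresh _ hc
  rw [colorsOf_pendantGraph (pendantExtension_comm hf e)]
  change (colorsOf G f ∪ _).ncard = _
  rw [Set.ncard_union_eq hfresh',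
    Set.ncard_iUnion_of_finite (fun _ => Set.toFinite _) hdisj, finsum_eq_sum_of_fintype]
  simp only [hcard]

theorem exists_isEdgeQColoring_pendantGraph [Fintype V] (hf : IsEdgeGColoring G g f)
    (hgp : ∀ v, g v + p v ≤ q) :
    ∃ f', IsEdgeQColoring (pendantGraph G p) q f' ∧
      (colorsOf (pendantGraph G p) f').ncard = (colorsOf G f).ncard + ∑ v, p v := by
  obtain ⟨e, he, hfresh⟩ :=
    exists_injective_nat_forall_notMem (α := V × ℕ) (Set.toFinite (colorsOf G f))
  exact ⟨_, isEdgeQColoring_pendantExtension hf hgp e,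
    ncard_colorsOf_pendantExtension hf.1 he hfresh⟩

end Extension

theorem exists_isEdgeGColoring_of_pendantGraph [Fintype V] {G : SimpleGraph V} {g p : V → ℕ}
    {q : ℕ} (hg : ∀ v, 1 ≤ g v) (hgp : ∀ v, q ≤ g v + p v)
    {f' : V ⊕ V × ℕ → V ⊕ V × ℕ → ℕ} (hf' : IsEdgeQColoring (pendantGraph G p) q f') :
    ∃ f, IsEdgeGColoring G g f ∧
      (colorsOf (pendantGraph G p) f').ncard ≤ (colorsOf G f).ncard + ∑ v, p v := by
  set f : V → V → ℕ := fun x y => f' (.inl x) (.inl y)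
  set C := colorsOf G f
  set lost : V → Set ℕ := fun v => pendantColours f' p v \ C
  obtain ⟨f₀, hf₀, hmerge⟩ := exists_isEdgeGColoring_add_excess G f hg fun x y => hf'.1 _ _
  refine ⟨f₀, hf₀, ?_⟩
  have hvertex : ∀ v, ((vColors G f v).ncard - g v) + (lost v).ncard ≤ p v := fun v => by
    have hunion : (vColors G f v ∪ pendantColours f' p v).ncard =
        (vColors G f v).ncard + (pendantColours f' p v \ vColors G f v).ncard := by
      rw [← Set.union_sdiff_self, Set.ncard_union_eq Set.disjoint_sdiff_right]
    have hbudget : (vColors G f v ∪ pendantColours f' p v).ncard ≤ q := by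
      have := hf'.2 (.inl v)
      rwa [vColors_pendantGraph_inl] at this
    have hlost : (lost v).ncard ≤ (pendantColours f' p v \ vColors G f v).ncard :=
      Set.ncard_le_ncard (Set.sdiff_subset_sdiff_right (vColors_subset_colorsOf G f v))
    have := Set.ncard_le_ncard
      (Set.sdiff_subset (s := pendantColours f' p v) (t := vColors G f v))
    have := ncard_pendantColours_le (p := p) f' v
    have := hgp v
    omega
  have hcolours : colorsOf (pendantGraph G p) f' ⊆ C ∪ ⋃ v, lost v := by
    rw [colorsOf_pendantGraph hf'.1]
    rintro c (hc | hc)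
    · exact .inl hc
    · obtain ⟨v, hv⟩ := Set.mem_iUnion.mp hc
      by_cases hcC : c ∈ C
      · exact .inl hcC
      · exact .inr (Set.mem_iUnion.mpr ⟨v, hv, hcC⟩)
  calc (colorsOf (pendantGraph G p) f').ncard
      ≤ C.ncard + ∑ v, (lost v).ncard :=
        (Set.ncard_le_ncard hcolours).trans <| (Set.ncard_union_le _ _).trans <|
          Nat.add_le_add_left (Set.ncard_iUnion_le_of_fintype _) _
    _ ≤ (colorsOf G f₀).ncard + ∑ v, (((vColors G f v).ncard - g v) + (lost v).ncard) := by
        rw [Finset.sum_add_distrib]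
        exact (Nat.add_le_add_right hmerge _).trans_eq (Nat.add_assoc _ _ _)
    _ ≤ (colorsOf G f₀).ncard + ∑ v, p v :=
        Nat.add_le_add_left (Finset.sum_le_sum fun v _ => hvertex v) _

lemma sum_sub_eq_card_add_mul [Fintype V] {q : ℕ} (hq : 2 ≤ q) {g : V → ℕ}
    (hg : ∀ v, g v = 1 ∨ g v = 2) :
    ∑ v, (q - g v) = #{v | g v = 1} + (q - 2) * Fintype.card V := by
  have hterm : ∀ v, q - g v = (if g v = 1 then 1 else 0) + (q - 2) := fun v => by
    split_ifs <;> rcases hg v with h | h <;> omega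
  simp only [hterm, Finset.sum_add_distrib, Finset.sum_boole, Finset.sum_const, smul_eq_mul,
    Finset.card_univ, Nat.cast_id]
  ring

theorem stmt14_general [Fintype V] (G : SimpleGraph V) (q : ℕ) (hq : 2 ≤ q)
    (g : V → ℕ) (hg : ∀ v, g v = 1 ∨ g v = 2) (t : ℕ) :
    (∃ f : V → V → ℕ, IsEdgeGColoring G g f ∧ t ≤ (colorsOf G f).ncard) ↔
    (∃ f' : (V ⊕ V × ℕ) → (V ⊕ V × ℕ) → ℕ,
      IsEdgeQColoring (pendantGraph G (fun v => q - g v)) q f' ∧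
      t + (Finset.univ.filter (fun v => g v = 1)).card + (q - 2) * Fintype.card V ≤
        (colorsOf (pendantGraph G (fun v => q - g v)) f').ncard) := by
  have hsum := sum_sub_eq_card_add_mul hq hg
  have hgq : ∀ v, g v + (q - g v) = q := fun v => by rcases hg v with h | h <;> omega
  constructor
  · rintro ⟨f, hf, ht⟩
    obtain ⟨f', hf', hcard⟩ := exists_isEdgeQColoring_pendantGraph hf fun v => (hgq v).le
    exact ⟨f', hf', by omega⟩
  · rintro ⟨f', hf', ht⟩
    obtain ⟨f, hf, hcard⟩ := exists_isEdgeGColoring_of_pendantGraph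
      (fun v => by rcases hg v with h | h <;> omega) (fun v => (hgq v).ge) hf'
    exact ⟨f, hf, by omega⟩

/-- `G` has an edge `g`-colouring with at least `t` colours iff the
graph `G'`, obtained by attaching `q − g(v)` pendant vertices to each `v`, has an
edge `q`-colouring with at least `t + r + (q−2)n` colours, where `n = |V(G)|` and
`r = |{v : g(v) = 1}|`. -/
theorem stmt14 [Fintype V] [DecidableEq V] (G : SimpleGraph V) (q : ℕ) (hq : 2 ≤ q)
    (g : V → ℕ) (hg : ∀ v, g v = 1 ∨ g v = 2) (t : ℕ) :
    (∃ f : V → V → ℕ, IsEdgeGColoring G g f ∧ t ≤ (colorsOf G f).ncard) ↔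
    (∃ f' : (V ⊕ V × ℕ) → (V ⊕ V × ℕ) → ℕ,
      IsEdgeQColoring (pendantGraph G (fun v => q - g v)) q f' ∧
      t + (Finset.univ.filter (fun v => g v = 1)).card + (q - 2) * Fintype.card V ≤
        (colorsOf (pendantGraph G (fun v => q - g v)) f').ncard) :=
  stmt14_general G q hq g hg t
end

section
/- In the reduction graph H built from a Planar (≤3,3)-SAT formula φ with m clauses and n variables, if φ has a satisfying assignment then H has an edge g-colouring using at least m+1 distinct colours. -/
open Finset

variable {V : Type*}

/-- Vertices of the reduction graph `H`: clause vertices `c_i`, variable copies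
`x_{j,a}`, conflict vertices `n_{j,a,b}`, and the apex vertex `u`. -/
inductive HV (n m : ℕ) where
  | clause (i : Fin m)
  | varc (j : Fin n) (a : Fin 3)
  | confl (j : Fin n) (a b : Fin 3)
  | apex
  deriving DecidableEq

/-- The reduction graph `H` built from a `(≤3,3)`-SAT formula with `m` clauses
and `n` variables, where variable `j` occurs in clause `occ j a` with sign
`sgn j a` for `a ∈ {0,1,2}`.  Variable copy `x_{j,a}` is joined to its clause;
conflict vertex `n_{j,a,b}` (for `a < b`) is joined to `x_{j,a}` and `x_{j,b}`
iff the two occurrences have opposite signs; the apex `u` is joined to every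
clause vertex and every conflict vertex. -/
def satGraph (n m : ℕ) (occ : Fin n → Fin 3 → Fin m) (sgn : Fin n → Fin 3 → Bool) :
    SimpleGraph (HV n m) :=
  SimpleGraph.fromRel (fun x y =>
    match x, y with
    | HV.clause i, HV.varc j a => occ j a = i
    | HV.varc j' a', HV.confl j a b =>
        j = j' ∧ a < b ∧ (a' = a ∨ a' = b) ∧ sgn j a ≠ sgn j b
    | HV.apex, HV.clause _ => True
    | HV.apex, HV.confl _ a b => a < b
    | _, _ => False)

/-- The per-vertex colour bound `g` of the reduction: `g(u) = 1`, `g(c_i) = 2`,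
`g(x_{j,a}) = 1`, `g(n_{j,a,b}) = 2`. -/
def satBound (n m : ℕ) : HV n m → ℕ
  | HV.clause _ => 2
  | HV.varc _ _ => 1
  | HV.confl _ _ _ => 2
  | HV.apex => 1

/-!
Choose for every clause a true literal, i.e. a copy `x_{j,a}` with `sgn j a = σ j`. Give that
copy the weight `i + 1` of its clause `c_i` and every other vertex weight `0`, and colour each edge
by the sum of the weights of its ends. Then every clause `c_i` sees only the colours `0` and
`i + 1`, so all `m + 1` colours occur. A conflict vertex `n_{j,a,b}` joins two occurrences of
`x_j` with opposite signs, and under `σ` at most one of them is true, so `n_{j,a,b}` also sees at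
most two colours; every other vertex sees a single colour.
-/

section AdditiveColoring

variable (G : SimpleGraph V) (w : V → ℕ)

theorem vColors_add_subset (v : V) :
    vColors G (fun x y => w x + w y) v ⊆ (w v + ·) '' (w '' G.neighborSet v) := by
  rintro _ ⟨u, huv, rfl⟩
  exact ⟨w u, ⟨u, huv, rfl⟩, rfl⟩

theorem ncard_vColors_add_le {v : V} {s : Set ℕ} (hs : s.Finite)
    (h : ∀ u, G.Adj v u → w u ∈ s) : (vColors G (fun x y => w x + w y) v).ncard ≤ s.ncard := by
  have hsub : w '' G.neighborSet v ⊆ s := by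
    rintro _ ⟨u, hu, rfl⟩
    exact h u hu
  calc (vColors G (fun x y => w x + w y) v).ncard
      ≤ ((w v + ·) '' (w '' G.neighborSet v)).ncard :=
        Set.ncard_le_ncard (vColors_add_subset G w v) ((hs.subset hsub).image _)
    _ ≤ (w '' G.neighborSet v).ncard := Set.ncard_image_le (hs.subset hsub)
    _ ≤ s.ncard := Set.ncard_le_ncard hsub hs

theorem colorsOf_add_finite (hw : (Set.range w).Finite) :
    (colorsOf G (fun x y => w x + w y)).Finite :=
  (hw.image2 (· + ·) hw).subset fun _ ⟨u, v, _, huv⟩ => ⟨w u, ⟨u, rfl⟩, w v, ⟨v, rfl⟩, huv⟩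

end AdditiveColoring

theorem ncard_pair_le {α : Type*} (a b : α) : ({a, b} : Set α).ncard ≤ 2 :=
  (Set.ncard_insert_le a {b}).trans (by rw [Set.ncard_singleton])

section Reduction

variable {n m : ℕ} {occ : Fin n → Fin 3 → Fin m} {sgn : Fin n → Fin 3 → Bool}

theorem satGraph_adj_apex {u : HV n m} (h : (satGraph n m occ sgn).Adj .apex u) :
    (∃ i, u = .clause i) ∨ ∃ j a b, u = .confl j a b := by
  cases u <;> simp_all [satGraph]

theorem satGraph_adj_varc {j : Fin n} {a : Fin 3} {u : HV n m}
    (h : (satGraph n m occ sgn).Adj (.varc j a) u) :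
    (∃ i, u = .clause i) ∨ ∃ j' a' b', u = .confl j' a' b' := by
  cases u <;> simp_all [satGraph]

theorem satGraph_adj_clause {i : Fin m} {u : HV n m}
    (h : (satGraph n m occ sgn).Adj (.clause i) u) :
    u = .apex ∨ ∃ j a, u = .varc j a ∧ occ j a = i := by
  cases u <;> simp_all [satGraph]

theorem satGraph_adj_confl {j : Fin n} {a b : Fin 3} {u : HV n m}
    (h : (satGraph n m occ sgn).Adj (.confl j a b) u) :
    u = .apex ∨ ∃ c, u = .varc j c ∧ (c = a ∨ c = b) ∧ sgn j a ≠ sgn j b := by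
  cases u with
  | varc j' c =>
    obtain ⟨rfl, -, hc, hs⟩ : j = j' ∧ a < b ∧ (c = a ∨ c = b) ∧ sgn j a ≠ sgn j b := by
      simpa [satGraph] using h
    exact .inr ⟨c, rfl, hc, hs⟩
  | _ => simp_all [satGraph]

theorem satGraph_adj_apex_clause (i : Fin m) : (satGraph n m occ sgn).Adj .apex (.clause i) := by
  simp [satGraph]

theorem satGraph_adj_clause_varc (j : Fin n) (a : Fin 3) :
    (satGraph n m occ sgn).Adj (.clause (occ j a)) (.varc j a) := by
  simp [satGraph]

end Reduction

section Witness

variable {n m : ℕ} (occ : Fin n → Fin 3 → Fin m) (jw : Fin m → Fin n) (aw : Fin m → Fin 3)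

/-- Clause `i` has chosen the occurrence `x_{jw i, aw i}`; colours are shifted by one against the
paper's (`i + 1` for `c_i`, `Fin m` being `0`-based), so that `0` stays the background colour. -/
def witnessWeight : HV n m → ℕ
  | .varc j a => if jw (occ j a) = j ∧ aw (occ j a) = a then occ j a + 1 else 0
  | _ => 0

theorem witnessWeight_le (x : HV n m) : witnessWeight occ jw aw x ≤ m := by
  cases x with
  | varc j a =>
    simp only [witnessWeight]
    split_ifs
    exacts [(occ j a).isLt, m.zero_le]
  | _ => exact m.zero_le

theorem witnessWeight_varc_mem (j : Fin n) (a : Fin 3) :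
    witnessWeight occ jw aw (.varc j a) ∈ ({0, (occ j a : ℕ) + 1} : Set ℕ) := by
  simp only [witnessWeight]
  split_ifs <;> simp

theorem witnessWeight_witness (hocc : ∀ i, occ (jw i) (aw i) = i) (i : Fin m) :
    witnessWeight occ jw aw (.varc (jw i) (aw i)) = i + 1 := by
  simp [witnessWeight, hocc]

variable {occ jw aw}

theorem witnessWeight_varc_eq_zero_or {sgn : Fin n → Fin 3 → Bool} {σ : Fin n → Bool}
    (hsgn : ∀ i, sgn (jw i) (aw i) = σ (jw i)) {j : Fin n} {a b : Fin 3}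
    (hab : sgn j a ≠ sgn j b) :
    witnessWeight occ jw aw (.varc j a) = 0 ∨ witnessWeight occ jw aw (.varc j b) = 0 := by
  by_contra! ⟨ha, hb⟩
  simp only [witnessWeight, ne_eq, ite_eq_right_iff, Classical.not_imp] at ha hb
  obtain ⟨⟨hja, haa⟩, -⟩ := ha
  obtain ⟨⟨hjb, hab'⟩, -⟩ := hb
  have hσa := hsgn (occ j a)
  have hσb := hsgn (occ j b)
  rw [hja, haa] at hσa
  rw [hjb, hab'] at hσb
  exact hab (hσa.trans hσb.symm)

end Witness

section Coloring

variable {n m : ℕ} {occ : Fin n → Fin 3 → Fin m} {sgn : Fin n → Fin 3 → Bool}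
  {jw : Fin m → Fin n} {aw : Fin m → Fin 3}

theorem isEdgeGColoring_witnessWeight {σ : Fin n → Bool}
    (hsgn : ∀ i, sgn (jw i) (aw i) = σ (jw i)) :
    IsEdgeGColoring (satGraph n m occ sgn) (satBound n m)
      (fun x y => witnessWeight occ jw aw x + witnessWeight occ jw aw y) := by
  refine ⟨fun _ _ => add_comm _ _, fun v => ?_⟩
  cases v with
  | apex =>
    refine (ncard_vColors_add_le _ _ (Set.finite_singleton 0) fun u hu => ?_).trans_eq
      (Set.ncard_singleton 0)
    rcases satGraph_adj_apex hu with ⟨i, rfl⟩ | ⟨j, a, b, rfl⟩ <;> rfl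
  | varc j a =>
    refine (ncard_vColors_add_le _ _ (Set.finite_singleton 0) fun u hu => ?_).trans_eq
      (Set.ncard_singleton 0)
    rcases satGraph_adj_varc hu with ⟨i, rfl⟩ | ⟨j', a', b', rfl⟩ <;> rfl
  | clause i =>
    refine (ncard_vColors_add_le _ _ (Set.toFinite _) fun u hu => ?_).trans
      (ncard_pair_le 0 ((i : ℕ) + 1))
    rcases satGraph_adj_clause hu with rfl | ⟨j, a, rfl, rfl⟩
    exacts [.inl rfl, witnessWeight_varc_mem occ jw aw j a]
  | confl j a b =>
    refine (ncard_vColors_add_le _ _ (Set.toFinite _) fun u hu => ?_).trans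
      (ncard_pair_le (0 : ℕ)
        (witnessWeight occ jw aw (.varc j a) + witnessWeight occ jw aw (.varc j b)))
    rcases satGraph_adj_confl hu with rfl | ⟨c, rfl, rfl | rfl, hab⟩
    · exact .inl rfl
    all_goals
      rcases witnessWeight_varc_eq_zero_or (occ := occ) hsgn hab with h | h <;> simp [h]

theorem le_ncard_colorsOf_witnessWeight (hm : 1 ≤ m) (hocc : ∀ i, occ (jw i) (aw i) = i) :
    m + 1 ≤ (colorsOf (satGraph n m occ sgn)
      (fun x y => witnessWeight occ jw aw x + witnessWeight occ jw aw y)).ncard := by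
  have hfin : (Set.range (witnessWeight occ jw aw)).Finite :=
    (Set.finite_Iic m).subset (Set.range_subset_iff.2 (witnessWeight_le occ jw aw))
  have hsub : (Finset.range (m + 1) : Set ℕ) ⊆ colorsOf (satGraph n m occ sgn)
      (fun x y => witnessWeight occ jw aw x + witnessWeight occ jw aw y) := by
    intro k hk
    rw [Finset.coe_range, Set.mem_Iio] at hk
    cases k with
    | zero => exact ⟨.apex, .clause ⟨0, hm⟩, satGraph_adj_apex_clause _, rfl⟩
    | succ i =>
      let c : Fin m := ⟨i, by omega⟩
      refine ⟨.clause c, .varc (jw c) (aw c), ?_, ?_⟩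
      · have hadj := satGraph_adj_clause_varc (occ := occ) (sgn := sgn) (jw c) (aw c)
        rwa [hocc] at hadj
      · exact (zero_add _).trans (witnessWeight_witness occ jw aw hocc c)
  simpa using Set.ncard_le_ncard hsub (colorsOf_add_finite _ _ hfin)

end Coloring

theorem stmt16_general (n m : ℕ) (hm : 1 ≤ m)
    (occ : Fin n → Fin 3 → Fin m) (sgn : Fin n → Fin 3 → Bool)
    (hsat : ∃ σ : Fin n → Bool, ∀ i : Fin m, ∃ j a, occ j a = i ∧ sgn j a = σ j) :
    ∃ f : HV n m → HV n m → ℕ,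
      IsEdgeGColoring (satGraph n m occ sgn) (satBound n m) f ∧
      m + 1 ≤ (colorsOf (satGraph n m occ sgn) f).ncard := by
  obtain ⟨σ, hσ⟩ := hsat
  choose jw aw hocc hsgn using hσ
  exact ⟨_, isEdgeGColoring_witnessWeight hsgn, le_ncard_colorsOf_witnessWeight hm hocc⟩

/-- if the formula has a satisfying assignment, then `H` has an
edge `g`-colouring using at least `m + 1` distinct colours. -/
theorem stmt16 (n m : ℕ) (hm : 1 ≤ m)
    (occ : Fin n → Fin 3 → Fin m) (sgn : Fin n → Fin 3 → Bool)
    (hocc : ∀ j, Function.Injective (occ j))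
    (hsat : ∃ σ : Fin n → Bool, ∀ i : Fin m, ∃ j a, occ j a = i ∧ sgn j a = σ j) :
    ∃ f : HV n m → HV n m → ℕ,
      IsEdgeGColoring (satGraph n m occ sgn) (satBound n m) f ∧
      m + 1 ≤ (colorsOf (satGraph n m occ sgn) f).ncard :=
  stmt16_general n m hm occ sgn hsat
end
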